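/- arXiv:1505.05304 — 4 statements merged into one kernel-verified Lean document; each statement's English description precedes it below -/
import Mathlib

section
/- Fix ξ ∈ ℝ² and ε > 0. Then there exist C > 0 and δ₀ ∈ (0,1) such that for all δ ∈ (0,δ₀), | ∫_{B_ε(ξ)} e^{w_{δ,ξ}(x)} w_{δ,ξ}(x) dx − 8π( log(8δ^{−2}) − 2 ) | ≤ C δ² |log δ|. Equivalently, ∫_{B_ε(ξ)} e^{w_{δ,ξ}} w_{δ,ξ} dx = 8π( log(8δ^{−2}) − 2 ) + O(δ² log δ) as δ → 0⁺. -/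
/-!
Writing `ρ(r) = 8δ²/(δ² + r²)²`, the integrand `e^w w = ρ log ρ` is radial about `ξ`, and
`r ρ log ρ` has the explicit primitive `G(r) = 4δ²(2 - log ρ(r))/(δ² + r²)`. In polar
coordinates the integral is `2π(G(ε) - G(0))`. Since `ρ(0) = 8δ⁻²`, the term `-2πG(0)` is
exactly `8π(log(8δ⁻²) - 2)`, and the remainder `2πG(ε)` is `O(δ² |log δ|)` because
`log ρ(ε) = log 8 + 2 log δ - 2 log(δ² + ε²)`.
-/

open MeasureTheory Real

/-- The Liouville bubble `w_{δ,ξ}(x) = log(8δ² / (δ² + |x−ξ|²)²)`. -/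
noncomputable def bubble (δ : ℝ) (ξ : EuclideanSpace ℝ (Fin 2)) (x : EuclideanSpace ℝ (Fin 2)) : ℝ :=
  Real.log (8 * δ ^ 2 / (δ ^ 2 + ‖x - ξ‖ ^ 2) ^ 2)

theorem setIntegral_ball_fun_norm_sub (f : ℝ → ℝ) (ξ : EuclideanSpace ℝ (Fin 2)) {ε : ℝ}
    (hε : 0 ≤ ε) :
    ∫ x in Metric.ball ξ ε, f ‖x - ξ‖ = 2 * π * ∫ r in 0..ε, r * f r := by
  have hind : ∀ x, (Metric.ball ξ ε).indicator (fun x => f ‖x - ξ‖) x =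
      (Set.Iio ε).indicator f ‖x - ξ‖ := by
    intro x
    by_cases h : ‖x - ξ‖ < ε <;> simp [Set.indicator, dist_eq_norm, h]
  have hsmul : (fun y : ℝ => y ^ 1 • (Set.Iio ε).indicator f y) =
      (Set.Iio ε).indicator (fun y => y * f y) := by
    ext y
    by_cases h : y < ε <;> simp [Set.indicator, h]
  rw [← integral_indicator measurableSet_ball]
  simp_rw [hind]
  rw [integral_sub_right_eq_self (fun y => (Set.Iio ε).indicator f ‖y‖) ξ,
    integral_fun_norm_addHaar, finrank_euclideanSpace_fin, hsmul,
    setIntegral_indicator measurableSet_Iio, Set.Ioi_inter_Iio, ← integral_Ioc_eq_integral_Ioo,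
    ← intervalIntegral.integral_of_le hε]
  simp [measureReal_def, pi_pos.le, mul_assoc]

noncomputable def liouvilleDensity (δ r : ℝ) : ℝ := 8 * δ ^ 2 / (δ ^ 2 + r ^ 2) ^ 2

section Liouville

variable {δ : ℝ}

theorem liouvilleDensity_pos (hδ : δ ≠ 0) (r : ℝ) : 0 < liouvilleDensity δ r := by
  unfold liouvilleDensity; positivity

theorem log_liouvilleDensity (hδ : δ ≠ 0) (r : ℝ) :
    log (liouvilleDensity δ r) = log (8 * δ ^ 2) - 2 * log (δ ^ 2 + r ^ 2) := by
  rw [liouvilleDensity, log_div (by positivity) (by positivity), log_pow]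
  push_cast; ring

theorem exp_bubble_mul_bubble (hδ : δ ≠ 0) (ξ x : EuclideanSpace ℝ (Fin 2)) :
    exp (bubble δ ξ x) * bubble δ ξ x =
      liouvilleDensity δ ‖x - ξ‖ * log (liouvilleDensity δ ‖x - ξ‖) := by
  rw [bubble, ← liouvilleDensity, exp_log (liouvilleDensity_pos hδ _)]

noncomputable def liouvilleMulLogPrimitive (δ r : ℝ) : ℝ :=
  4 * δ ^ 2 * (2 - log (liouvilleDensity δ r)) / (δ ^ 2 + r ^ 2)

theorem hasDerivAt_liouvilleMulLogPrimitive (hδ : δ ≠ 0) (r : ℝ) :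
    HasDerivAt (liouvilleMulLogPrimitive δ)
      (r * (liouvilleDensity δ r * log (liouvilleDensity δ r))) r := by
  have hu : δ ^ 2 + r ^ 2 ≠ 0 := by positivity
  have hsq : HasDerivAt (fun r : ℝ => δ ^ 2 + r ^ 2) (2 * r) r := by
    simpa using (hasDerivAt_pow 2 r).const_add (δ ^ 2)
  have hnum : HasDerivAt (fun r => 4 * δ ^ 2 * (2 - log (liouvilleDensity δ r)))
      (4 * δ ^ 2 * (2 * (2 * r / (δ ^ 2 + r ^ 2)))) r := by
    simp_rw [log_liouvilleDensity hδ]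
    simpa using (((hsq.log hu).const_mul 2).const_sub _).const_sub 2 |>.const_mul (4 * δ ^ 2)
  refine (hnum.div hsq hu).congr_deriv ?_
  rw [log_liouvilleDensity hδ, liouvilleDensity]
  field_simp
  ring

theorem liouvilleMulLogPrimitive_zero (hδ : δ ≠ 0) :
    liouvilleMulLogPrimitive δ 0 = -4 * (log (8 * δ⁻¹ ^ 2) - 2) := by
  have h0 : liouvilleDensity δ 0 = 8 * δ⁻¹ ^ 2 := by
    rw [liouvilleDensity]; field_simp; ring
  rw [liouvilleMulLogPrimitive, h0]
  field_simp
  ring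

theorem continuous_liouvilleDensity (hδ : δ ≠ 0) : Continuous (liouvilleDensity δ) :=
  continuous_const.div (by fun_prop) fun r => by positivity

theorem integral_exp_bubble_mul_bubble (ξ : EuclideanSpace ℝ (Fin 2)) (hδ : δ ≠ 0) {ε : ℝ}
    (hε : 0 ≤ ε) :
    ∫ x in Metric.ball ξ ε, exp (bubble δ ξ x) * bubble δ ξ x =
      8 * π * (log (8 * δ⁻¹ ^ 2) - 2) + 2 * π * liouvilleMulLogPrimitive δ ε := by
  have hρ := continuous_liouvilleDensity hδ
  have hlogρ := hρ.log fun r => (liouvilleDensity_pos hδ r).ne'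
  have hint : IntervalIntegrable
      (fun r => r * (liouvilleDensity δ r * log (liouvilleDensity δ r))) volume 0 ε :=
    (continuous_id.mul (hρ.mul hlogρ)).intervalIntegrable 0 ε
  simp_rw [exp_bubble_mul_bubble hδ]
  rw [setIntegral_ball_fun_norm_sub (fun r => liouvilleDensity δ r * log (liouvilleDensity δ r))
    ξ hε, intervalIntegral.integral_eq_sub_of_hasDerivAt
    (fun r _ => hasDerivAt_liouvilleMulLogPrimitive hδ r) hint, liouvilleMulLogPrimitive_zero hδ]
  ring

theorem abs_liouvilleMulLogPrimitive_le (hδ : δ ≠ 0) {ε : ℝ} (hε : ε ≠ 0) :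
    |liouvilleMulLogPrimitive δ ε| ≤
      4 * δ ^ 2 / ε ^ 2 * |2 - log (liouvilleDensity δ ε)| := by
  rw [liouvilleMulLogPrimitive, abs_div, abs_mul, abs_of_pos (by positivity : 0 < 4 * δ ^ 2),
    abs_of_pos (by positivity : 0 < δ ^ 2 + ε ^ 2), div_mul_eq_mul_div]
  gcongr
  exact le_add_of_nonneg_left (sq_nonneg δ)

theorem abs_two_sub_log_liouvilleDensity_le (hδ : 0 < δ) (hδe : δ < exp (-1)) {ε : ℝ}
    (hε : ε ≠ 0) :
    |2 - log (liouvilleDensity δ ε)| ≤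
      (4 + log 8 + 2 * max |log (ε ^ 2)| |log (1 + ε ^ 2)|) * |log δ| := by
  have hlogδ : 1 ≤ |log δ| :=
    le_abs.mpr (Or.inr (by linarith [(log_lt_log hδ hδe).trans_eq (log_exp _)]))
  have hδ1 : δ < 1 := hδe.trans (exp_lt_one_iff.mpr (by norm_num))
  have hmid : |log (δ ^ 2 + ε ^ 2)| ≤ max |log (ε ^ 2)| |log (1 + ε ^ 2)| :=
    abs_le_max_abs_abs (log_le_log (by positivity) (by nlinarith))
      (log_le_log (by positivity) (by nlinarith))
  have hlog8 : 0 ≤ log 8 := log_nonneg (by norm_num)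
  have hsplit : 2 - log (liouvilleDensity δ ε) =
      2 - log 8 - 2 * log δ + 2 * log (δ ^ 2 + ε ^ 2) := by
    rw [log_liouvilleDensity hδ.ne', log_mul (by norm_num) (by positivity), log_pow]
    push_cast; ring
  rw [hsplit]
  calc |2 - log 8 - 2 * log δ + 2 * log (δ ^ 2 + ε ^ 2)|
      ≤ 2 + log 8 + 2 * |log δ| + 2 * |log (δ ^ 2 + ε ^ 2)| := by
        rw [abs_le]
        constructor <;> linarith [le_abs_self (log δ), neg_abs_le (log δ),
          le_abs_self (log (δ ^ 2 + ε ^ 2)), neg_abs_le (log (δ ^ 2 + ε ^ 2))]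
    _ ≤ (4 + log 8 + 2 * max |log (ε ^ 2)| |log (1 + ε ^ 2)|) * |log δ| := by
        nlinarith [le_max_left |log (ε ^ 2)| |log (1 + ε ^ 2)|, abs_nonneg (log (ε ^ 2))]

end Liouville

/-- Fix `ξ ∈ ℝ²` and `ε > 0`. Then there are `C > 0` and `δ₀ ∈ (0,1)` such that for all
`δ ∈ (0,δ₀)`,
`|∫_{B_ε(ξ)} e^{w_{δ,ξ}} w_{δ,ξ} dx − 8π(log(8δ⁻²) − 2)| ≤ C δ² |log δ|`. -/
theorem bubble_log_integral (ξ : EuclideanSpace ℝ (Fin 2)) (ε : ℝ) (hε : 0 < ε) :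
    ∃ C : ℝ, 0 < C ∧ ∃ δ₀ : ℝ, 0 < δ₀ ∧ δ₀ < 1 ∧
      ∀ δ : ℝ, 0 < δ → δ < δ₀ →
        |(∫ x in Metric.ball ξ ε, Real.exp (bubble δ ξ x) * bubble δ ξ x)
            - 8 * Real.pi * (Real.log (8 * δ⁻¹ ^ 2) - 2)|
          ≤ C * δ ^ 2 * |Real.log δ| := by
  set K := 4 + log 8 + 2 * max |log (ε ^ 2)| |log (1 + ε ^ 2)|
  refine ⟨8 * π / ε ^ 2 * K, by positivity, exp (-1), exp_pos _,
    exp_lt_one_iff.mpr (by norm_num), fun δ hδ hδe => ?_⟩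
  rw [integral_exp_bubble_mul_bubble ξ hδ.ne' hε.le, add_sub_cancel_left, abs_mul,
    abs_of_pos (by positivity : (0 : ℝ) < 2 * π)]
  calc 2 * π * |liouvilleMulLogPrimitive δ ε|
      ≤ 2 * π * (4 * δ ^ 2 / ε ^ 2 * |2 - log (liouvilleDensity δ ε)|) := by
        gcongr; exact abs_liouvilleMulLogPrimitive_le hδ.ne' hε.ne'
    _ ≤ 2 * π * (4 * δ ^ 2 / ε ^ 2 * (K * |log δ|)) := by
        gcongr; exact abs_two_sub_log_liouvilleDensity_le hδ hδe hε.ne'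
    _ = 8 * π / ε ^ 2 * K * δ ^ 2 * |log δ| := by ring
end

section
/- Fix ξ ∈ ℝ², ε > 0 and p with 1 ≤ p < 2. Then there exists C > 0 such that for all δ ∈ (0,1], ∫_{B_ε(ξ)} e^{p w_{δ,ξ}(x)} (δ² + |x−ξ|)^p dx ≤ C δ^{2−p}, where e^{p w_{δ,ξ}(x)} = 8^p δ^{2p} / (δ² + |x−ξ|²)^{2p}. -/
open MeasureTheory Real

/-!
For `δ ≤ 1` the integrand is bounded on all of `ℝ²` by `32^p δ^{-p} (1 + |x - ξ|/δ)^{-3p}`, a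
rescaled copy of the profile `(1 + |y|)^{-3p}`, which is integrable on `ℝ²` because `3p > 2`.
The substitution `y = (x - ξ)/δ` contributes the Jacobian `δ²`, whence the bound `C δ^{2-p}`.
-/

/-- For `δ ≤ 1` the factor `δ² + r` is at most `δ + r`, and `(δ + r)² ≤ 2 (δ² + r²)`. -/
lemma bubble_weight_le {δ r : ℝ} (hδ : 0 < δ) (hδ1 : δ ≤ 1) (hr : 0 ≤ r) :
    8 * δ ^ 2 / (δ ^ 2 + r ^ 2) ^ 2 * (δ ^ 2 + r) ≤ 32 * δ⁻¹ * ((1 + r / δ)⁻¹) ^ 3 := by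
  have hrhs : 32 * δ⁻¹ * ((1 + r / δ)⁻¹) ^ 3 = 32 * δ ^ 2 / (δ + r) ^ 3 := by
    field_simp
  rw [hrhs, div_mul_eq_mul_div, div_le_div_iff₀ (by positivity) (by positivity)]
  have hsum : δ ^ 2 + r ≤ δ + r := by nlinarith
  have hsq : (δ + r) ^ 2 ≤ 2 * (δ ^ 2 + r ^ 2) := by nlinarith [sq_nonneg (δ - r)]
  have h4 : (δ + r) ^ 4 ≤ 4 * (δ ^ 2 + r ^ 2) ^ 2 := by nlinarith
  have hprod : (δ ^ 2 + r) * (δ + r) ^ 3 ≤ 4 * (δ ^ 2 + r ^ 2) ^ 2 :=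
    le_trans (mul_le_mul_of_nonneg_right hsum (by positivity)) (by nlinarith)
  nlinarith [mul_le_mul_of_nonneg_left hprod (by positivity : (0:ℝ) ≤ 8 * δ ^ 2)]

lemma rpow_bubble_weight_le {δ r p : ℝ} (hδ : 0 < δ) (hδ1 : δ ≤ 1) (hr : 0 ≤ r) (hp : 0 ≤ p) :
    (8 * δ ^ 2 / (δ ^ 2 + r ^ 2) ^ 2) ^ p * (δ ^ 2 + r) ^ p
      ≤ 32 ^ p * δ ^ (-p) * (1 + r / δ) ^ (-(3 * p)) := by
  have hq : 0 < 1 + r / δ := by positivity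
  calc (8 * δ ^ 2 / (δ ^ 2 + r ^ 2) ^ 2) ^ p * (δ ^ 2 + r) ^ p
      = (8 * δ ^ 2 / (δ ^ 2 + r ^ 2) ^ 2 * (δ ^ 2 + r)) ^ p :=
        (mul_rpow (by positivity) (by positivity)).symm
    _ ≤ (32 * δ⁻¹ * ((1 + r / δ)⁻¹) ^ 3) ^ p :=
        rpow_le_rpow (by positivity) (bubble_weight_le hδ hδ1 hr) hp
    _ = 32 ^ p * δ ^ (-p) * (1 + r / δ) ^ (-(3 * p)) := by
        rw [mul_rpow (by positivity) (by positivity), mul_rpow (by positivity) (by positivity),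
          inv_rpow hδ.le, ← rpow_neg hδ.le, ← rpow_natCast, ← rpow_mul (by positivity),
          inv_rpow hq.le, ← rpow_neg hq.le]
        norm_num

lemma exp_mul_bubble (p : ℝ) {δ : ℝ} (hδ : δ ≠ 0) (ξ x : EuclideanSpace ℝ (Fin 2)) :
    exp (p * bubble δ ξ x) = (8 * δ ^ 2 / (δ ^ 2 + ‖x - ξ‖ ^ 2) ^ 2) ^ p := by
  rw [bubble, rpow_def_of_pos (by positivity), mul_comm]

section Rescaling

variable {E F : Type*} [NormedAddCommGroup E] [NormedSpace ℝ E] [FiniteDimensional ℝ E]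
  [MeasurableSpace E] [BorelSpace E] (μ : Measure E) [μ.IsAddHaarMeasure]
  [NormedAddCommGroup F] [NormedSpace ℝ F]

theorem integral_comp_inv_smul_sub_of_nonneg (f : E → F) {R : ℝ} (hR : 0 ≤ R) (ξ : E) :
    ∫ x, f (R⁻¹ • (x - ξ)) ∂μ = R ^ Module.finrank ℝ E • ∫ x, f x ∂μ := by
  rw [integral_sub_right_eq_self (fun x => f (R⁻¹ • x)) ξ,
    Measure.integral_comp_inv_smul_of_nonneg μ f hR]

end Rescaling

theorem bubble_Lp_estimate_general (ξ : EuclideanSpace ℝ (Fin 2)) (ε : ℝ)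
    (p : ℝ) (hp1 : 1 ≤ p) :
    ∃ C : ℝ, 0 < C ∧ ∀ δ : ℝ, 0 < δ → δ ≤ 1 →
      (∫ x in Metric.ball ξ ε,
          Real.exp (p * bubble δ ξ x) * (δ ^ 2 + ‖x - ξ‖) ^ p)
        ≤ C * δ ^ (2 - p) := by
  set g : EuclideanSpace ℝ (Fin 2) → ℝ := fun y => (1 + ‖y‖) ^ (-(3 * p))
  have hg : Integrable g := integrable_one_add_norm (by rw [finrank_euclideanSpace_fin]; push_cast; linarith)
  have hgpos : 0 < ∫ y, g y := by
    rw [integral_pos_iff_support_of_nonneg (fun y => by positivity) hg,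
      Set.eq_univ_of_forall fun y => Function.mem_support.mpr (by positivity)]
    simp
  refine ⟨32 ^ p * ∫ y, g y, by positivity, fun δ hδ hδ1 => ?_⟩
  set F := fun x : EuclideanSpace ℝ (Fin 2) => 32 ^ p * δ ^ (-p) * g (δ⁻¹ • (x - ξ))
  have hF : Integrable F :=
    ((hg.comp_smul (inv_ne_zero hδ.ne')).comp_sub_right ξ).const_mul _
  have hle : ∀ x, exp (p * bubble δ ξ x) * (δ ^ 2 + ‖x - ξ‖) ^ p ≤ F x := fun x => by
    have hnorm : ‖δ⁻¹ • (x - ξ)‖ = ‖x - ξ‖ / δ := by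
      rw [norm_smul, norm_inv, norm_of_nonneg hδ.le, inv_mul_eq_div]
    simp only [F, g, hnorm, exp_mul_bubble p hδ.ne']
    exact rpow_bubble_weight_le hδ hδ1 (norm_nonneg _) (by linarith)
  calc (∫ x in Metric.ball ξ ε, exp (p * bubble δ ξ x) * (δ ^ 2 + ‖x - ξ‖) ^ p)
      ≤ ∫ x in Metric.ball ξ ε, F x :=
        integral_mono_of_nonneg (.of_forall fun x => by positivity) hF.restrict (.of_forall hle)
    _ ≤ ∫ x, F x := setIntegral_le_integral hF (.of_forall fun x => by positivity)
    _ = 32 ^ p * δ ^ (-p) * (δ ^ 2 * ∫ y, g y) := by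
        rw [integral_const_mul, integral_comp_inv_smul_sub_of_nonneg _ _ hδ.le,
          finrank_euclideanSpace_fin, smul_eq_mul]
    _ = (32 ^ p * ∫ y, g y) * δ ^ (2 - p) := by
        rw [rpow_sub hδ, rpow_neg hδ.le, rpow_two]
        ring

/-- Fix `ξ ∈ ℝ²`, `ε > 0` and `1 ≤ p < 2`. Then there exists `C > 0` such that for all
`δ ∈ (0,1]`, `∫_{B_ε(ξ)} e^{p w_{δ,ξ}(x)} (δ² + |x−ξ|)^p dx ≤ C δ^{2−p}`. -/
theorem bubble_Lp_estimate (ξ : EuclideanSpace ℝ (Fin 2)) (ε : ℝ) (hε : 0 < ε)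
    (p : ℝ) (hp1 : 1 ≤ p) (hp2 : p < 2) :
    ∃ C : ℝ, 0 < C ∧ ∀ δ : ℝ, 0 < δ → δ ≤ 1 →
      (∫ x in Metric.ball ξ ε,
          Real.exp (p * bubble δ ξ x) * (δ ^ 2 + ‖x - ξ‖) ^ p)
        ≤ C * δ ^ (2 - p) :=
  bubble_Lp_estimate_general ξ ε p hp1
end

section
/- Fix ξ ∈ ℝ², ε > 0 and c ∈ ℝ. Then there exist C > 0 and δ₀ ∈ (0,1) such that for all δ ∈ (0,δ₀), | ∫_{B_ε(ξ)} e^{w_{δ,ξ}(x)} ( w_{δ,ξ}(x) − log(8δ²) + c ) dx − 8π( −2 log(δ²) + c − 2 ) | ≤ C δ² |log δ|. -/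
/-! With `r = ‖x - ξ‖` the integrand is the radial function `8δ²(c - 2 log(δ² + r²))/(δ² + r²)²`,
and `r` times it has the explicit primitive `F(r) = 4δ²(2 log(δ² + r²) + 2 - c)/(δ² + r²)`.
Integrating in polar coordinates, the integral is exactly
`2π(F(ε) - F(0)) = 8π(-2 log δ² + c - 2) + 2πF(ε)`, and the remainder `2πF(ε)` is `O(δ²)`
uniformly for `|δ| ≤ 1`; for `δ < e⁻¹` one has `|log δ| ≥ 1`. -/

open MeasureTheory Real

open Set Metric

theorem integral_ball_fun_norm_sub_addHaar {E F : Type*} [NormedAddCommGroup E] [NormedSpace ℝ E]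
    [Nontrivial E] [FiniteDimensional ℝ E] [MeasurableSpace E] [BorelSpace E] (μ : Measure E)
    [μ.IsAddHaarMeasure] [NormedAddCommGroup F] [NormedSpace ℝ F] (ξ : E) (ε : ℝ) (f : ℝ → F) :
    ∫ x in ball ξ ε, f ‖x - ξ‖ ∂μ = Module.finrank ℝ E • μ.real (ball 0 1) •
      ∫ y in Ioo 0 ε, y ^ (Module.finrank ℝ E - 1) • f y := by
  have hind : (ball ξ ε).indicator (fun x => f ‖x - ξ‖) = fun x => (Iio ε).indicator f ‖x - ξ‖ := by
    ext x
    by_cases h : ‖x - ξ‖ < ε <;> simp [indicator, dist_eq_norm, h]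
  rw [← integral_indicator measurableSet_ball, hind,
    integral_sub_right_eq_self (fun x => (Iio ε).indicator f ‖x‖) ξ, integral_fun_norm_addHaar μ,
    ← indicator_smul (Iio ε) (fun y : ℝ => y ^ (Module.finrank ℝ E - 1)) f,
    setIntegral_indicator measurableSet_Iio, Ioi_inter_Iio]

theorem integral_ball_fun_norm_sub_fin_two (ξ : EuclideanSpace ℝ (Fin 2)) (ε : ℝ) (f : ℝ → ℝ) :
    ∫ x in ball ξ ε, f ‖x - ξ‖ = 2 * π * ∫ y in Ioo 0 ε, y * f y := by
  simp [integral_ball_fun_norm_sub_addHaar, measureReal_def, pi_nonneg, mul_assoc]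

theorem exp_bubble_mul_eq {δ : ℝ} (hδ : δ ≠ 0) (ξ x : EuclideanSpace ℝ (Fin 2)) (c : ℝ) :
    exp (bubble δ ξ x) * (bubble δ ξ x - log (8 * δ ^ 2) + c) =
      8 * δ ^ 2 / (δ ^ 2 + ‖x - ξ‖ ^ 2) ^ 2 * (c - 2 * log (δ ^ 2 + ‖x - ξ‖ ^ 2)) := by
  have hden : 0 < δ ^ 2 + ‖x - ξ‖ ^ 2 := by positivity
  have hexp : exp (bubble δ ξ x) = 8 * δ ^ 2 / (δ ^ 2 + ‖x - ξ‖ ^ 2) ^ 2 :=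
    exp_log (by positivity)
  have hlog : bubble δ ξ x = log (8 * δ ^ 2) - 2 * log (δ ^ 2 + ‖x - ξ‖ ^ 2) := by
    rw [bubble, log_div (by positivity) (by positivity), log_pow, Nat.cast_ofNat]
  rw [hexp, hlog]
  ring

theorem hasDerivAt_bubble_primitive {δ : ℝ} (hδ : δ ≠ 0) (c r : ℝ) :
    HasDerivAt (fun r => 4 * δ ^ 2 * (2 * log (δ ^ 2 + r ^ 2) + 2 - c) / (δ ^ 2 + r ^ 2))
      (r * (8 * δ ^ 2 / (δ ^ 2 + r ^ 2) ^ 2 * (c - 2 * log (δ ^ 2 + r ^ 2)))) r := by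
  have hden : δ ^ 2 + r ^ 2 ≠ 0 := by positivity
  have hq : HasDerivAt (fun r : ℝ => δ ^ 2 + r ^ 2) (2 * r) r := by
    simpa using (hasDerivAt_pow 2 r).const_add (δ ^ 2)
  refine (((((hq.log hden).const_mul 2).add_const 2).sub_const c).const_mul (4 * δ ^ 2)).div hq
    hden |>.congr_deriv ?_
  field_simp
  ring

theorem integral_exp_bubble_mul_ball {δ : ℝ} (hδ : δ ≠ 0) (ξ : EuclideanSpace ℝ (Fin 2))
    {ε : ℝ} (hε : 0 ≤ ε) (c : ℝ) :
    ∫ x in ball ξ ε, exp (bubble δ ξ x) * (bubble δ ξ x - log (8 * δ ^ 2) + c) =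
      8 * π * (-2 * log (δ ^ 2) + c - 2) +
        8 * π * δ ^ 2 * (2 * log (δ ^ 2 + ε ^ 2) + 2 - c) / (δ ^ 2 + ε ^ 2) := by
  have hcont : Continuous fun r : ℝ =>
      r * (8 * δ ^ 2 / (δ ^ 2 + r ^ 2) ^ 2 * (c - 2 * log (δ ^ 2 + r ^ 2))) := by
    have : ∀ r : ℝ, δ ^ 2 + r ^ 2 ≠ 0 := fun r => by positivity
    fun_prop (disch := simp [this])
  rw [setIntegral_congr_fun measurableSet_ball fun x _ => exp_bubble_mul_eq hδ ξ x c,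
    integral_ball_fun_norm_sub_fin_two ξ ε
      (fun r => 8 * δ ^ 2 / (δ ^ 2 + r ^ 2) ^ 2 * (c - 2 * log (δ ^ 2 + r ^ 2))),
    ← integral_Ioc_eq_integral_Ioo, ← intervalIntegral.integral_of_le hε,
    intervalIntegral.integral_eq_sub_of_hasDerivAt (fun r _ => hasDerivAt_bubble_primitive hδ c r)
      (hcont.intervalIntegrable 0 ε)]
  rw [zero_pow two_ne_zero, add_zero]
  field_simp
  ring

theorem abs_bubble_remainder_le {δ : ℝ} (hδ : |δ| ≤ 1) {ε : ℝ} (hε : ε ≠ 0) (c : ℝ) :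
    |8 * π * δ ^ 2 * (2 * log (δ ^ 2 + ε ^ 2) + 2 - c) / (δ ^ 2 + ε ^ 2)| ≤
      8 * π * (2 * max |log (ε ^ 2)| |log (1 + ε ^ 2)| + 2 + |c|) / ε ^ 2 * δ ^ 2 := by
  have hlog : |log (δ ^ 2 + ε ^ 2)| ≤ max |log (ε ^ 2)| |log (1 + ε ^ 2)| :=
    abs_le_max_abs_abs (log_le_log (by positivity) (le_add_of_nonneg_left (sq_nonneg δ)))
      (log_le_log (by positivity) (by nlinarith [sq_abs δ, abs_nonneg δ]))
  have hnum : |2 * log (δ ^ 2 + ε ^ 2) + 2 - c| ≤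
      2 * max |log (ε ^ 2)| |log (1 + ε ^ 2)| + 2 + |c| :=
    calc _ ≤ |2 * log (δ ^ 2 + ε ^ 2) + 2| + |c| := abs_sub _ _
      _ ≤ |2 * log (δ ^ 2 + ε ^ 2)| + |(2 : ℝ)| + |c| := by gcongr; exact abs_add_le _ _
      _ ≤ _ := by rw [abs_mul, abs_two]; gcongr
  calc _ = 8 * π * δ ^ 2 * |2 * log (δ ^ 2 + ε ^ 2) + 2 - c| / (δ ^ 2 + ε ^ 2) := by
        rw [abs_div, abs_mul, abs_of_nonneg (by positivity : 0 ≤ 8 * π * δ ^ 2),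
          abs_of_pos (by positivity : 0 < δ ^ 2 + ε ^ 2)]
    _ ≤ 8 * π * δ ^ 2 * (2 * max |log (ε ^ 2)| |log (1 + ε ^ 2)| + 2 + |c|) / ε ^ 2 := by
        gcongr
        exact le_add_of_nonneg_left (sq_nonneg δ)
    _ = _ := by ring

/-- Fix `ξ ∈ ℝ²`, `ε > 0` and `c ∈ ℝ`. Then there are `C > 0` and `δ₀ ∈ (0,1)` such that
for all `δ ∈ (0,δ₀)`,
`|∫_{B_ε(ξ)} e^{w_{δ,ξ}} (w_{δ,ξ} − log(8δ²) + c) dx − 8π(−2 log(δ²) + c − 2)| ≤ C δ² |log δ|`. -/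
theorem bubble_projected_integral (ξ : EuclideanSpace ℝ (Fin 2)) (ε : ℝ) (hε : 0 < ε)
    (c : ℝ) :
    ∃ C : ℝ, 0 < C ∧ ∃ δ₀ : ℝ, 0 < δ₀ ∧ δ₀ < 1 ∧
      ∀ δ : ℝ, 0 < δ → δ < δ₀ →
        |(∫ x in Metric.ball ξ ε,
              Real.exp (bubble δ ξ x) * (bubble δ ξ x - Real.log (8 * δ ^ 2) + c))
            - 8 * Real.pi * (-2 * Real.log (δ ^ 2) + c - 2)|
          ≤ C * δ ^ 2 * |Real.log δ| := by
  have hδ₀_lt_one : exp (-1) < 1 := exp_lt_one_iff.mpr (by norm_num)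
  refine ⟨8 * π * (2 * max |log (ε ^ 2)| |log (1 + ε ^ 2)| + 2 + |c|) / ε ^ 2, by positivity,
    exp (-1), exp_pos _, hδ₀_lt_one, fun δ hδ hδ₀ => ?_⟩
  have hδ_le_one : |δ| ≤ 1 := (abs_of_pos hδ).trans_le (hδ₀.trans hδ₀_lt_one).le
  have hlog : 1 ≤ |log δ| := le_abs.mpr (Or.inr (by linarith [(log_lt_iff_lt_exp hδ).mpr hδ₀]))
  rw [integral_exp_bubble_mul_ball hδ.ne' ξ hε.le c, add_sub_cancel_left]
  calc _ ≤ _ := abs_bubble_remainder_le hδ_le_one hε.ne' c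
    _ ≤ _ := le_mul_of_one_le_right (by positivity) hlog
end

section
/- Let U ⊂ ℂ be an open set, let ξ₁, ξ₂ ∈ U with ξ₁ ≠ ξ₂, let ω : U → ℂ be analytic on U, and let n₁, n₂, γ > 0 be real numbers. Define, for z ∈ U \ {ξ₁, ξ₂}, f(z) = (1/2)·( n₁/(4π(z−ξ₁)) − n₂/(4π(z−ξ₂)) + ω(z) )² − n₁/(4π(z−ξ₁)²) − n₂/(4πγ(z−ξ₂)²). If there exists an analytic function F : U → ℂ with F(z) = f(z) for all z ∈ U \ {ξ₁, ξ₂}, then ω(ξ₁) = 2/(γ(ξ₁ − ξ₂)). -/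
/-!
Near `ξ₁` the function expands as `(a²/2 - a)/(z-ξ₁)² + a·g(z)/(z-ξ₁) + (regular)`, where
`a = n₁/4π` and `g(z) = ω(z) - b/(z-ξ₂)` with `b = n₂/4π`; near `ξ₂` the coefficient of
`(z-ξ₂)⁻²` is `b²/2 - b/γ`. Since `F` is continuous, both double-pole coefficients and the
residue `a·g(ξ₁)` vanish. As `a, b ≠ 0` this gives `b = 2/γ` and `ω(ξ₁) = b/(ξ₁ - ξ₂)`.
-/

open Filter Topology

section Laurent

variable {𝕜 : Type*} [NontriviallyNormedField 𝕜]

theorem eq_zero_of_sub_mul_eventuallyEq {F G : 𝕜 → 𝕜} {ξ : 𝕜} (hF : ContinuousAt F ξ)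
    (hG : ContinuousAt G ξ) (h : ∀ᶠ z in 𝓝[≠] ξ, (z - ξ) * F z = G z) : G ξ = 0 := by
  have hcont : ContinuousAt (fun z => (z - ξ) * F z) ξ := by fun_prop
  have hlim : Tendsto (fun z => (z - ξ) * F z) (𝓝[≠] ξ) (𝓝 0) := by
    simpa using hcont.tendsto.mono_left nhdsWithin_le_nhds
  exact tendsto_nhds_unique ((hG.tendsto.mono_left nhdsWithin_le_nhds).congr' (h.mono
    fun _ hz => hz.symm)) hlim

theorem laurent_coeffs_eq_zero_of_continuousAt {F β ρ : 𝕜 → 𝕜} {ξ α : 𝕜}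
    (hF : ContinuousAt F ξ) (hβ : ContinuousAt β ξ) (hρ : ContinuousAt ρ ξ)
    (h : ∀ᶠ z in 𝓝[≠] ξ, F z = α / (z - ξ) ^ 2 + β z / (z - ξ) + ρ z) :
    α = 0 ∧ β ξ = 0 := by
  have hx : ∀ᶠ z in 𝓝[≠] ξ, z - ξ ≠ 0 :=
    eventually_mem_nhdsWithin.mono fun _ hz => sub_ne_zero.mpr hz
  have hα : α + (ξ - ξ) * (β ξ + (ξ - ξ) * ρ ξ) = 0 :=
    eq_zero_of_sub_mul_eventuallyEq (ξ := ξ) (F := fun z => (z - ξ) * F z)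
      (G := fun z => α + (z - ξ) * (β z + (z - ξ) * ρ z)) (by fun_prop) (by fun_prop) <| by
      filter_upwards [h, hx] with z hz hzξ
      rw [hz]
      field_simp
      ring
  simp only [sub_self, zero_mul, add_zero] at hα
  have hβ : β ξ + (ξ - ξ) * ρ ξ = 0 :=
    eq_zero_of_sub_mul_eventuallyEq (G := fun z => β z + (z - ξ) * ρ z) hF (by fun_prop) <| by
      filter_upwards [h, hx] with z hz hzξ
      rw [hz, hα]
      field_simp
      ring
  simpa [hα] using hβ

theorem coeffs_eq_zero_of_half_sq {F g D : 𝕜 → 𝕜} {ξ p q : 𝕜} [CharZero 𝕜]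
    (hF : ContinuousAt F ξ) (hg : ContinuousAt g ξ) (hD : ContinuousAt D ξ)
    (h : ∀ᶠ z in 𝓝[≠] ξ, F z = 1 / 2 * (p / (z - ξ) + g z) ^ 2 - q / (z - ξ) ^ 2 - D z) :
    p ^ 2 / 2 - q = 0 ∧ p * g ξ = 0 := by
  refine laurent_coeffs_eq_zero_of_continuousAt (β := fun z => p * g z)
    (ρ := fun z => g z ^ 2 / 2 - D z) hF (by fun_prop) (by fun_prop) ?_
  filter_upwards [h, eventually_mem_nhdsWithin] with z hz hzξ
  have hzξ' : z - ξ ≠ 0 := sub_ne_zero.mpr hzξ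
  rw [hz]
  field_simp
  ring

end Laurent

theorem eventually_nhdsNE_mem_diff_pair {U : Set ℂ} (hU : IsOpen U) {ξ η : ℂ} (hξ : ξ ∈ U)
    (hne : ξ ≠ η) : ∀ᶠ z in 𝓝[≠] ξ, z ∈ U \ {ξ, η} := by
  filter_upwards [nhdsWithin_le_nhds (hU.mem_nhds hξ),
    nhdsWithin_le_nhds (isOpen_compl_singleton.mem_nhds hne), eventually_mem_nhdsWithin]
    with z hzU hzη hzξ
  simp_all

theorem residue_balancing_general (U : Set ℂ) (hU : IsOpen U) (ξ₁ ξ₂ : ℂ)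
    (hξ₁ : ξ₁ ∈ U) (hξ₂ : ξ₂ ∈ U) (hne : ξ₁ ≠ ξ₂)
    (ω : ℂ → ℂ) (hω : DifferentiableOn ℂ ω U)
    (n₁ n₂ γ : ℝ) (hn₁ : 0 < n₁) (hn₂ : 0 < n₂)
    (F : ℂ → ℂ) (hF : DifferentiableOn ℂ F U)
    (hFf : ∀ z ∈ U \ {ξ₁, ξ₂},
      F z = (1 / 2) * ((n₁ : ℂ) / (4 * Real.pi * (z - ξ₁))
              - (n₂ : ℂ) / (4 * Real.pi * (z - ξ₂)) + ω z) ^ 2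
            - (n₁ : ℂ) / (4 * Real.pi * (z - ξ₁) ^ 2)
            - (n₂ : ℂ) / (4 * Real.pi * γ * (z - ξ₂) ^ 2)) :
    ω ξ₁ = 2 / ((γ : ℂ) * (ξ₁ - ξ₂)) := by
  set a : ℂ := n₁ / (4 * Real.pi)
  set b : ℂ := n₂ / (4 * Real.pi)
  have hb : b ≠ 0 := div_ne_zero (by exact_mod_cast hn₂.ne') (by simp [Real.pi_ne_zero])
  have ha : a ≠ 0 := div_ne_zero (by exact_mod_cast hn₁.ne') (by simp [Real.pi_ne_zero])
  have hcont : ∀ {G : ℂ → ℂ}, DifferentiableOn ℂ G U → ∀ ξ ∈ U, ContinuousAt G ξ :=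
    fun hG ξ hξ => hG.continuousOn.continuousAt (hU.mem_nhds hξ)
  have hsub₁ : ξ₁ - ξ₂ ≠ 0 := sub_ne_zero.mpr hne
  have hsub₂ : ξ₂ - ξ₁ ≠ 0 := sub_ne_zero.mpr hne.symm
  obtain ⟨-, hres⟩ := coeffs_eq_zero_of_half_sq (p := a) (q := a)
    (g := fun z => ω z - b / (z - ξ₂)) (D := fun z => b / γ / (z - ξ₂) ^ 2)
    (hcont hF ξ₁ hξ₁) (by have := hcont hω ξ₁ hξ₁; fun_prop (disch := assumption))
    (by fun_prop (disch := simpa using hsub₁)) <|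
    (eventually_nhdsNE_mem_diff_pair hU hξ₁ hne).mono fun z hz => by
      rw [hFf z hz]; simp only [a, b, ← div_div]; ring
  obtain ⟨hpole₂, -⟩ := coeffs_eq_zero_of_half_sq (p := -b) (q := b / γ)
    (g := fun z => ω z + a / (z - ξ₁)) (D := fun z => a / (z - ξ₁) ^ 2)
    (hcont hF ξ₂ hξ₂) (by have := hcont hω ξ₂ hξ₂; fun_prop (disch := assumption))
    (by fun_prop (disch := simpa using hsub₂)) <|
    (eventually_nhdsNE_mem_diff_pair hU hξ₂ hne.symm).mono fun z hz => by
      rw [hFf z (by rwa [Set.pair_comm])]; simp only [a, b, ← div_div]; ring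
  have hb_eq : b = 2 / γ := by
    have : b * (b - 2 / γ) = 0 := by linear_combination 2 * hpole₂
    exact sub_eq_zero.mp ((mul_eq_zero.mp this).resolve_left hb)
  have hω₁ : ω ξ₁ = b / (ξ₁ - ξ₂) := sub_eq_zero.mp ((mul_eq_zero.mp hres).resolve_left ha)
  rw [hω₁, hb_eq, div_div]

/-- Vanishing of the first-order pole at `ξ₁`. Let `U ⊂ ℂ` be open, `ξ₁ ≠ ξ₂` points of `U`,
`ω` analytic on `U`, and `n₁, n₂, γ > 0` real. If the function
`f(z) = (1/2)(n₁/(4π(z−ξ₁)) − n₂/(4π(z−ξ₂)) + ω(z))² − n₁/(4π(z−ξ₁)²) − n₂/(4πγ(z−ξ₂)²)`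
extends to an analytic function `F` on all of `U`, then `ω(ξ₁) = 2/(γ(ξ₁ − ξ₂))`. -/
theorem residue_balancing (U : Set ℂ) (hU : IsOpen U) (ξ₁ ξ₂ : ℂ)
    (hξ₁ : ξ₁ ∈ U) (hξ₂ : ξ₂ ∈ U) (hne : ξ₁ ≠ ξ₂)
    (ω : ℂ → ℂ) (hω : DifferentiableOn ℂ ω U)
    (n₁ n₂ γ : ℝ) (hn₁ : 0 < n₁) (hn₂ : 0 < n₂) (hγ : 0 < γ)
    (F : ℂ → ℂ) (hF : DifferentiableOn ℂ F U)
    (hFf : ∀ z ∈ U \ {ξ₁, ξ₂},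
      F z = (1 / 2) * ((n₁ : ℂ) / (4 * Real.pi * (z - ξ₁))
              - (n₂ : ℂ) / (4 * Real.pi * (z - ξ₂)) + ω z) ^ 2
            - (n₁ : ℂ) / (4 * Real.pi * (z - ξ₁) ^ 2)
            - (n₂ : ℂ) / (4 * Real.pi * γ * (z - ξ₂) ^ 2)) :
    ω ξ₁ = 2 / ((γ : ℂ) * (ξ₁ - ξ₂)) :=
  residue_balancing_general U hU ξ₁ ξ₂ hξ₁ hξ₂ hne ω hω n₁ n₂ γ hn₁ hn₂ F hF hFf
end
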